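/- Let f ∈ C¹(S¹) with ∫ f dx = 0 and let a_1, a_2, … be any sequence of integers ≥ 2. Then for all i, j ≥ 1, |E_μ[(f ∘ T_{[i]}) · (f ∘ T_{[j]})]| ≤ 2^{−|i−j|+1} ‖f‖², where ‖f‖ := sup|f| + sup|f'|. -/

import Mathlib

/-!
Setting: the circle `S¹ = ℝ/ℤ` with Lebesgue (Haar) probability measure, realized as
`1`-periodic functions on `ℝ` together with Lebesgue measure restricted to `(0, 1]`.
For an integer `b ≥ 2`, the map `T_b x = bx (mod 1)` lifts to `x ↦ b * x` on `ℝ`, and its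
Perron–Frobenius operator (the `L²`-adjoint of the Koopman operator `g ↦ g ∘ T_b`) is
`(T̂*_b g)(x) = (1/b) ∑_{j<b} g((x+j)/b)`.
-/

open MeasureTheory ProbabilityTheory Filter Function
open scoped ENNReal Topology

/-- The Lebesgue (Haar) probability measure of the circle, realized on `(0, 1] ⊆ ℝ`. -/
noncomputable def circleMeasure : Measure ℝ := volume.restrict (Set.Ioc 0 1)

/-- The Perron–Frobenius operator of `T_b x = bx (mod 1)`, acting on (`1`-periodic)
functions on `ℝ`: `(T̂*_b g)(x) = (1/b) ∑_{j<b} g((x+j)/b)`. -/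
noncomputable def PFc (b : ℕ) (g : ℝ → ℝ) : ℝ → ℝ :=
  fun x => (1 / (b : ℝ)) * ∑ j ∈ Finset.range b, g ((x + j) / b)

/-- `T̂*_{b_1} ⋯ T̂*_{b_k} g` for a finite sequence `[b_1, …, b_k]`. -/
noncomputable def PFcList (l : List ℕ) (g : ℝ → ℝ) : ℝ → ℝ := l.foldr PFc g

/-- `PFcSeg a i j = T̂*_{[i..j]} = T̂*_{a_j} ⋯ T̂*_{a_i}` for `i ≤ j`, the identity otherwise. -/
noncomputable def PFcSeg (a : ℕ → ℕ) (i : ℕ) : ℕ → (ℝ → ℝ) → (ℝ → ℝ)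
  | 0 => id
  | j + 1 => if i ≤ j + 1 then fun g => PFc (a (j + 1)) (PFcSeg a i j g) else id

/-- `u_k = ∑_{i=1}^k T̂*_{[i+1..k]} f`. -/
noncomputable def uc (a : ℕ → ℕ) (f : ℝ → ℝ) (k : ℕ) : ℝ → ℝ :=
  fun x => ∑ i ∈ Finset.Icc 1 k, PFcSeg a (i + 1) k f x

/-- `T_{[k]} = T_{a_k} ∘ ⋯ ∘ T_{a_1}` is multiplication (mod 1) by `∏_{i=1}^k a_i`. -/
def prodA (a : ℕ → ℕ) (k : ℕ) : ℕ := ∏ i ∈ Finset.Icc 1 k, a i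

/-- The Birkhoff-like sums `S_n = ∑_{k=1}^n f ∘ T_{[k]}`, for a `1`-periodic `f`. -/
noncomputable def Sc (a : ℕ → ℕ) (f : ℝ → ℝ) (n : ℕ) : ℝ → ℝ :=
  fun x => ∑ k ∈ Finset.Icc 1 n, f ((prodA a k : ℝ) * x)

/-- The `C¹`-norm `‖g‖ = sup|g| + sup|g'|`. -/
noncomputable def Cnorm (g : ℝ → ℝ) : ℝ := (⨆ x : ℝ, |g x|) + ⨆ x : ℝ, |deriv g x|

/-- The pullback σ-algebra `T_b^{-1}(Borel)` on the circle, realized on `ℝ` as the σ-algebra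
generated by the lift `x ↦ fract (b * x)` of `T_b`. -/
noncomputable def circleSigma (b : ℕ) : MeasurableSpace ℝ :=
  MeasurableSpace.comap (fun x => Int.fract ((b : ℝ) * x)) Real.measurableSpace

/-- `cos²χ_k = ‖E[u_k | T_{a_{k+1}}^{-1}(Borel)]‖²_{L²} / ‖u_k‖²_{L²}` (`= 0` when `u_k = 0`,
by the convention `c / 0 = 0`). -/
noncomputable def cos2c (a : ℕ → ℕ) (f : ℝ → ℝ) (k : ℕ) : ℝ :=
  (∫ x, ((circleMeasure[uc a f k|circleSigma (a (k + 1))]) x) ^ 2 ∂circleMeasure) /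
    ∫ x, (uc a f k x) ^ 2 ∂circleMeasure

/-!
Write `T_{[j]} = T_Q ∘ T_{[i]}` with `Q = a_{i+1} ⋯ a_j ≥ 2^{j-i}`. Since `T_{[i]}` preserves `μ`,
the correlation equals `∫ f · (f ∘ T_Q)`. On each of the `Q` intervals of length `1/Q` the function
`f ∘ T_Q` has mean zero, so there `f` may be replaced by `f` minus its value at the left endpoint,
which is at most `sup|f'| / Q`. Summing, `|∫ f · (f ∘ T_Q)| ≤ sup|f| · sup|f'| / Q`.
-/

open scoped NNReal

namespace Function.Periodic

variable {f : ℝ → ℝ} {c : ℝ}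

theorem bddAbove_range_abs (hf : Periodic f c) (hc : c ≠ 0) (hcont : Continuous f) :
    BddAbove (Set.range fun x => |f x|) :=
  ((hf.comp abs).compact_of_continuous hc (continuous_abs.comp hcont)).isBounded.bddAbove

theorem deriv (hf : Periodic f c) : Periodic (_root_.deriv f) c := fun x => by
  rw [← deriv_comp_add_const, show (fun y => f (y + c)) = f from funext hf]

theorem intervalIntegral_comp_mul_eq_zero (hf : Periodic f c) (h0 : ∫ x in 0..c, f x = 0)
    {Q : ℝ} (hQ : Q ≠ 0) (t : ℝ) : ∫ x in t..t + c / Q, f (Q * x) = 0 := by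
  rw [intervalIntegral.integral_comp_mul_left f hQ, mul_add, mul_div_cancel₀ _ hQ,
    hf.intervalIntegral_add_eq _ 0, zero_add, h0, smul_zero]

theorem intervalIntegral_comp_nat_mul (hf : Periodic f c)
    (h_int : ∀ t₁ t₂, IntervalIntegrable f volume t₁ t₂) {N : ℕ} (hN : N ≠ 0) :
    ∫ x in 0..c, f (N * x) = ∫ x in 0..c, f x := by
  have hN' : (N : ℝ) ≠ 0 := Nat.cast_ne_zero.2 hN
  have h := hf.intervalIntegral_add_zsmul_eq N 0 h_int
  simp only [zero_add, natCast_zsmul] at h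
  rw [intervalIntegral.integral_comp_mul_left f hN', mul_zero, ← nsmul_eq_mul, h, nsmul_eq_mul,
    smul_eq_mul, inv_mul_cancel_left₀ hN']

end Function.Periodic

theorem LipschitzWith.abs_intervalIntegral_mul_le {g φ : ℝ → ℝ} {K : ℝ≥0} {M s t : ℝ}
    (hg : LipschitzWith K g) (hφ : IntervalIntegrable φ volume s t) (hφM : ∀ x, |φ x| ≤ M)
    (hφ0 : ∫ x in s..t, φ x = 0) :
    |∫ x in s..t, g x * φ x| ≤ K * M * (t - s) ^ 2 := by
  have hsub : ∫ x in s..t, g x * φ x = ∫ x in s..t, (g x - g s) * φ x := by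
    simp_rw [sub_mul]
    rw [intervalIntegral.integral_sub (hφ.continuousOn_mul hg.continuous.continuousOn)
      (hφ.const_mul _), intervalIntegral.integral_const_mul, hφ0, mul_zero, sub_zero]
  have hbound : ∀ x ∈ Set.uIoc s t, ‖(g x - g s) * φ x‖ ≤ K * |t - s| * M := by
    intro x hx
    rw [Real.norm_eq_abs, abs_mul]
    gcongr
    · calc |g x - g s| ≤ K * |x - s| := by
            simpa only [Real.dist_eq] using hg.dist_le_mul x s
        _ ≤ K * |t - s| := mul_le_mul_of_nonneg_left
            (Set.abs_sub_left_of_mem_uIcc (Set.uIoc_subset_uIcc hx)) K.coe_nonneg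
    · exact hφM x
  calc |∫ x in s..t, g x * φ x| = ‖∫ x in s..t, (g x - g s) * φ x‖ := by
        rw [hsub, Real.norm_eq_abs]
    _ ≤ K * |t - s| * M * |t - s| := intervalIntegral.norm_integral_le_of_norm_le_const hbound
    _ = K * M * (t - s) ^ 2 := by rw [← sq_abs (t - s)]; ring

theorem LipschitzWith.abs_intervalIntegral_mul_comp_nat_mul_le {g φ : ℝ → ℝ} {K : ℝ≥0}
    {M T : ℝ} (hg : LipschitzWith K g) (hφ : Periodic φ T) (hφc : Continuous φ)
    (hφM : ∀ x, |φ x| ≤ M) (hφ0 : ∫ x in 0..T, φ x = 0) {Q : ℕ} (hQ : Q ≠ 0) :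
    |∫ x in 0..T, g x * φ (Q * x)| ≤ K * M * T ^ 2 / Q := by
  have hQ' : (Q : ℝ) ≠ 0 := Nat.cast_ne_zero.2 hQ
  set c : ℕ → ℝ := fun k => k * (T / Q) with hc
  have hcont : Continuous fun x => g x * φ (Q * x) := by
    have := hg.continuous
    fun_prop
  have hcell (k : ℕ) : |∫ x in c k..c (k + 1), g x * φ (Q * x)| ≤ K * M * (T / Q) ^ 2 := by
    have hlen : c (k + 1) = c k + T / Q := by simp only [hc]; push_cast; ring
    have := hg.abs_intervalIntegral_mul_le
      ((hφc.comp (continuous_const_mul _)).intervalIntegrable _ _) (fun x => hφM _) (hφ.intervalIntegral_comp_mul_eq_zero hφ0 hQ' (c k))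
    rwa [add_sub_cancel_left, ← hlen] at this
  calc |∫ x in 0..T, g x * φ (Q * x)|
      = |∑ k ∈ Finset.range Q, ∫ x in c k..c (k + 1), g x * φ (Q * x)| := by
        rw [intervalIntegral.sum_integral_adjacent_intervals
          (fun k _ => hcont.intervalIntegrable _ _)]
        simp [hc, mul_div_cancel₀ _ hQ']
    _ ≤ ∑ k ∈ Finset.range Q, |∫ x in c k..c (k + 1), g x * φ (Q * x)| :=
        Finset.abs_sum_le_sum_abs _ _
    _ ≤ ∑ k ∈ Finset.range Q, K * M * (T / Q) ^ 2 := Finset.sum_le_sum fun k _ => hcell k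
    _ = K * M * T ^ 2 / Q := by
        rw [Finset.sum_const, Finset.card_range, nsmul_eq_mul]; field_simp

theorem ContDiff.abs_intervalIntegral_mul_comp_nat_mul_le {f : ℝ → ℝ} {T : ℝ}
    (hf : ContDiff ℝ 1 f) (hper : Periodic f T) (hT : T ≠ 0) (hmean : ∫ x in 0..T, f x = 0)
    {Q : ℕ} (hQ : Q ≠ 0) :
    |∫ x in 0..T, f x * f (Q * x)| ≤ (⨆ x, |f x|) * (⨆ x, |deriv f x|) * T ^ 2 / Q := by
  set M' := ⨆ x, |deriv f x|
  have hM (x : ℝ) : |f x| ≤ ⨆ x, |f x| :=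
    le_ciSup (hper.bddAbove_range_abs hT hf.continuous) x
  have hM' (x : ℝ) : |deriv f x| ≤ M' :=
    le_ciSup (hper.deriv.bddAbove_range_abs hT (hf.continuous_deriv le_rfl)) x
  have hlip : LipschitzWith M'.toNNReal f :=
    lipschitzWith_of_nnnorm_deriv_le (hf.differentiable one_ne_zero) fun x =>
      NNReal.coe_le_coe.1 ((hM' x).trans (Real.le_coe_toNNReal _))
  have := hlip.abs_intervalIntegral_mul_comp_nat_mul_le hper hf.continuous hM hmean hQ
  rwa [Real.coe_toNNReal _ ((abs_nonneg _).trans (hM' 0)), mul_comm M'] at this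

theorem prodA_mul_prod_Ioc (a : ℕ → ℕ) {i j : ℕ} (hij : i ≤ j) :
    prodA a i * ∏ k ∈ Finset.Ioc i j, a k = prodA a j := by
  have hIcc (n : ℕ) : Finset.Icc 1 n = Finset.Ioc 0 n := Finset.Icc_add_one_left_eq_Ioc 0 n
  rw [prodA, prodA, hIcc, hIcc]
  exact Finset.prod_Ioc_consecutive a (Nat.zero_le i) hij

theorem integral_circleMeasure (F : ℝ → ℝ) : ∫ x, F x ∂circleMeasure = ∫ x in 0..1, F x :=
  (intervalIntegral.integral_of_le zero_le_one).symm

theorem integral_circleMeasure_comp_mul_mul_comp_mul {f : ℝ → ℝ} (hf : Periodic f 1)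
    (hcont : Continuous f) {P : ℕ} (hP : P ≠ 0) (Q : ℕ) :
    ∫ x, f (P * x) * f ((P * Q : ℕ) * x) ∂circleMeasure = ∫ x in 0..1, f x * f (Q * x) := by
  have hper : Periodic (fun x => f x * f (Q * x)) 1 :=
    hf.mul fun x => by rw [mul_add, hf.nat_mul Q]
  rw [integral_circleMeasure,
    ← hper.intervalIntegral_comp_nat_mul (fun _ _ => by
      apply Continuous.intervalIntegrable; fun_prop) hP]
  simp only [Nat.cast_mul, mul_assoc, mul_left_comm (Q : ℝ)]

theorem correlation_decay
    (f : ℝ → ℝ) (hf_per : Periodic f 1) (hf_C1 : ContDiff ℝ 1 f)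
    (hf_mean : ∫ x in Set.Ioc (0 : ℝ) 1, f x = 0)
    (a : ℕ → ℕ) (ha : ∀ k, 2 ≤ a k)
    (i j : ℕ) :
    |∫ x, f ((prodA a i : ℝ) * x) * f ((prodA a j : ℝ) * x) ∂circleMeasure| ≤
      (2 : ℝ) ^ (1 - |(i : ℤ) - (j : ℤ)|) * Cnorm f ^ 2 := by
  wlog hij : i ≤ j generalizing i j
  · simpa only [mul_comm, abs_sub_comm] using this j i (le_of_not_ge hij)
  obtain ⟨Q, hQ, hPQ⟩ : ∃ Q, 2 ^ (j - i) ≤ Q ∧ prodA a j = prodA a i * Q :=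
    ⟨_, by simpa using Finset.pow_card_le_prod (Finset.Ioc i j) a 2 fun k _ => ha k,
      (prodA_mul_prod_Ioc a hij).symm⟩
  have hP : prodA a i ≠ 0 := Finset.prod_ne_zero_iff.2 fun k _ => by have := ha k; omega
  have hmean : ∫ x in 0..1, f x = 0 := by rwa [intervalIntegral.integral_of_le zero_le_one]
  set M := ⨆ x, |f x|
  set M' := ⨆ x, |deriv f x|
  have hM : 0 ≤ M := Real.iSup_nonneg fun _ => abs_nonneg _
  have hM' : 0 ≤ M' := Real.iSup_nonneg fun _ => abs_nonneg _
  have hdist : |(i : ℤ) - j| = (j - i : ℕ) := by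
    rw [abs_sub_comm, abs_of_nonneg (by omega), Nat.cast_sub hij]
  rw [hPQ, integral_circleMeasure_comp_mul_mul_comp_mul hf_per hf_C1.continuous hP]
  calc |∫ x in 0..1, f x * f (Q * x)| ≤ M * M' * 1 ^ 2 / Q :=
        hf_C1.abs_intervalIntegral_mul_comp_nat_mul_le hf_per one_ne_zero hmean
          ((Nat.two_pow_pos _).trans_le hQ).ne'
    _ ≤ M * M' / 2 ^ (j - i) := by rw [one_pow, mul_one]; gcongr; exact_mod_cast hQ
    _ ≤ 2 * (M + M') ^ 2 / 2 ^ (j - i) := by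
        gcongr ?_ / _; nlinarith [sq_nonneg (M - M')]
    _ = 2 ^ (1 - |(i : ℤ) - (j : ℤ)|) * Cnorm f ^ 2 := by
        rw [hdist, zpow_sub₀ two_ne_zero, zpow_one, zpow_natCast, Cnorm]; ring
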